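/- Let ζ be a root of unity of order dividing N, let n ∣ N, let ρ ⊆ π(n), and set n(ρ) = N_{ρ'}·n̲_ρ with n̲ = n/∏_{p∈π(n)} p. Then for any prime q dividing N: v_q(o(ζ^{n(ρ)})) = 0 if q ∉ ρ; v_q(o(ζ^{n(ρ)})) = 0 if q ∈ ρ and v_q(o(ζ)) < v_q(n); and v_q(o(ζ^{n(ρ)})) = v_q(o(ζ)) − v_q(n) + 1 if q ∈ ρ and v_q(o(ζ)) ≥ v_q(n). -/

import Mathlib

/-!
Write `d = o(ζ)` and `m = n(ρ)`. Since `o(ζ^m) = d / gcd(d, m)`, we have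
`v_q(o(ζ^m)) = v_q(d) - v_q(m)` (truncated). For `q ∉ ρ` this vanishes because
`v_q(m) = v_q(N) ≥ v_q(d)`; for `q ∈ ρ` it is `v_q(d) - (v_q(n) - 1)`, which is `0` when
`v_q(d) < v_q(n)` and `v_q(d) - v_q(n) + 1` otherwise, as `v_q(n) ≥ 1`.
-/

/-- `nrho N n ρ` is the integer with `q`-adic valuation `v_q(n) - 1` for `q ∈ ρ`
and `v_q(N)` for primes `q ∉ ρ`. -/
def nrho (N n : ℕ) (ρ : Finset ℕ) : ℕ :=
  ∏ p ∈ N.primeFactors, p ^ (if p ∈ ρ then n.factorization p - 1 else N.factorization p)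

theorem Nat.factorization_div_gcd {a b : ℕ} (ha : a ≠ 0) (hb : b ≠ 0) :
    (a / a.gcd b).factorization = a.factorization - b.factorization := by
  rw [Nat.factorization_div (Nat.gcd_dvd_left a b), Nat.factorization_gcd ha hb]
  ext p
  simp only [Finsupp.coe_tsub, Pi.sub_apply, Finsupp.inf_apply]
  omega

theorem IsOfFinOrder.factorization_orderOf_pow {G : Type*} [Monoid G] {x : G}
    (hx : IsOfFinOrder x) {m : ℕ} (hm : m ≠ 0) :
    (orderOf (x ^ m)).factorization = (orderOf x).factorization - m.factorization := by
  rw [hx.orderOf_pow, Nat.factorization_div_gcd hx.orderOf_pos.ne' hm]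

theorem nrho_ne_zero (N n : ℕ) (ρ : Finset ℕ) : nrho N n ρ ≠ 0 :=
  Finset.prod_ne_zero_iff.mpr fun _ hp => pow_ne_zero _ (Nat.prime_of_mem_primeFactors hp).ne_zero

theorem factorization_nrho {N n q : ℕ} (ρ : Finset ℕ) (hq : q ∈ N.primeFactors) :
    (nrho N n ρ).factorization q =
      if q ∈ ρ then n.factorization q - 1 else N.factorization q := by
  have hpow : ∀ p ∈ N.primeFactors, ∀ k, (p ^ k).factorization = Finsupp.single p k :=
    fun p hp _ => (Nat.prime_of_mem_primeFactors hp).factorization_pow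
  rw [nrho,
    Nat.factorization_prod fun _ hp => pow_ne_zero _ (Nat.prime_of_mem_primeFactors hp).ne_zero,
    Finsupp.finsetSum_apply, Finset.sum_eq_single_of_mem q hq, hpow q hq, Finsupp.single_eq_same]
  intro p hp hpq
  rw [hpow p hp, Finsupp.single_eq_of_ne hpq.symm]

theorem stmt_7_general (N n : ℕ) (hN : 0 < N)
    (ρ : Finset ℕ) (hρ : ρ ⊆ n.primeFactors)
    (ζ : ℂ) (hζ : ζ ^ N = 1)
    (q : ℕ) (hq : q.Prime) (hqN : q ∣ N) :
    (q ∉ ρ → (orderOf (ζ ^ nrho N n ρ)).factorization q = 0) ∧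
    (q ∈ ρ → (orderOf ζ).factorization q < n.factorization q →
      (orderOf (ζ ^ nrho N n ρ)).factorization q = 0) ∧
    (q ∈ ρ → n.factorization q ≤ (orderOf ζ).factorization q →
      (orderOf (ζ ^ nrho N n ρ)).factorization q =
        (orderOf ζ).factorization q - n.factorization q + 1) := by
  have hfin : IsOfFinOrder ζ := isOfFinOrder_iff_pow_eq_one.mpr ⟨N, hN, hζ⟩
  have hvq : (orderOf (ζ ^ nrho N n ρ)).factorization q =
      (orderOf ζ).factorization q - (nrho N n ρ).factorization q := by
    rw [hfin.factorization_orderOf_pow (nrho_ne_zero N n ρ), Finsupp.coe_tsub, Pi.sub_apply]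
  have hm := factorization_nrho (n := n) ρ (Nat.mem_primeFactors.mpr ⟨hq, hqN, hN.ne'⟩)
  have hdN : (orderOf ζ).factorization q ≤ N.factorization q :=
    (Nat.factorization_le_iff_dvd hfin.orderOf_pos.ne' hN.ne').mpr (orderOf_dvd_of_pow_eq_one hζ) q
  refine ⟨fun hqρ => ?_, fun hqρ hlt => ?_, fun hqρ hle => ?_⟩
  · rw [hvq, hm, if_neg hqρ]; omega
  · rw [hvq, hm, if_pos hqρ]; omega
  · have hnq : n.factorization q ≠ 0 := Finsupp.mem_support_iff.mp (hρ hqρ)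
    rw [hvq, hm, if_pos hqρ]; omega

theorem stmt_7 (N n : ℕ) (hN : 0 < N) (hn : n ∣ N) (hn0 : 0 < n)
    (ρ : Finset ℕ) (hρ : ρ ⊆ n.primeFactors)
    (ζ : ℂ) (hζ : ζ ^ N = 1)
    (q : ℕ) (hq : q.Prime) (hqN : q ∣ N) :
    (q ∉ ρ → (orderOf (ζ ^ nrho N n ρ)).factorization q = 0) ∧
    (q ∈ ρ → (orderOf ζ).factorization q < n.factorization q →
      (orderOf (ζ ^ nrho N n ρ)).factorization q = 0) ∧
    (q ∈ ρ → n.factorization q ≤ (orderOf ζ).factorization q →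
      (orderOf (ζ ^ nrho N n ρ)).factorization q =
        (orderOf ζ).factorization q - n.factorization q + 1) :=
  stmt_7_general N n hN ρ hρ ζ hζ q hq hqN
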